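/- arXiv:1905.00504 — 2 statements merged into one kernel-verified Lean document; each statement's English description precedes it below -/
import Mathlib

section
/- A DPP is a mixture of elementary DPPs: if L = ∑_{n=1}^N λ_n v_n v_nᵀ with {v_n} orthonormal and λ_n ≥ 0, then for every subset A ⊆ {1,…,N}, det(L_A)/det(L+I) = ∑_{J ⊆ {1,…,N}} P^{V_J}(A) · ∏_{n ∈ J} λ_n/(1+λ_n) · ∏_{n ∉ J} 1/(1+λ_n), where P^{V_J}(A) = det((∑_{n∈J} v_n v_nᵀ)_A) if |A| = |J| and P^{V_J}(A) = 0 otherwise; equivalently, det(L_A) = ∑_{J ⊆ {1,…,N}, |J| = |A|} det((∑_{n∈J} v_n v_nᵀ)_A) · ∏_{n∈J} λ_n. -/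
open Matrix BigOperators

/-- Principal submatrix of `L` indexed by a finset `A`. -/
def principalSubmatrix {N : ℕ} {R : Type*} (L : Matrix (Fin N) (Fin N) R)
    (A : Finset (Fin N)) : Matrix A A R :=
  L.submatrix (fun i : A => (i : Fin N)) (fun j : A => (j : Fin N))

open Finset in
/-- Multilinear expansion of the determinant of a principal submatrix of a
sum of rank-one matrices. -/
lemma principalSubmatrix_det_expand {N : ℕ} (v : Fin N → (Fin N → ℝ))
    (A : Finset (Fin N)) (c : Fin N → ℝ) (S : Finset (Fin N)) :
    (principalSubmatrix (∑ n ∈ S, c n • vecMulVec (v n) (v n)) A).det =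
      ∑ r ∈ Fintype.piFinset (fun _ : A => S),
        (∏ i : A, c (r i)) *
          ((∏ i : A, v (r i) i) * (Matrix.of fun i j : A => v (r i) (j : Fin N)).det) := by
  classical
  have h : (principalSubmatrix (∑ n ∈ S, c n • vecMulVec (v n) (v n)) A : A → A → ℝ)
      = fun i : A => ∑ n ∈ S, (c n * v n i) • (fun j : A => v n (j : Fin N)) := by
    funext i
    have : ∀ j : A, (principalSubmatrix (∑ n ∈ S, c n • vecMulVec (v n) (v n)) A) i j
        = ∑ n ∈ S, (c n * v n i) * v n (j : Fin N) := by
      intro j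
      simp [principalSubmatrix, vecMulVec, Matrix.sum_apply, mul_assoc]
    funext j
    rw [this j]
    simp [Finset.sum_apply]
  have hdet : (principalSubmatrix (∑ n ∈ S, c n • vecMulVec (v n) (v n)) A).det
      = Matrix.detRowAlternating
          (Matrix.of fun i : A => ∑ n ∈ S, (c n * v n i) • (fun j : A => v n (j : Fin N))) :=
    congrArg Matrix.detRowAlternating h
  rw [hdet]
  have := (Matrix.detRowAlternating (R := ℝ) (n := A)).toMultilinearMap.map_sum_finset
    (fun (i : A) (n : Fin N) => (c n * v n i) • (fun j : A => v n (j : Fin N)))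
    (fun _ : A => S)
  rw [show (Matrix.detRowAlternating
        (Matrix.of fun i : A => ∑ n ∈ S, (c n * v n i) • (fun j : A => v n (j : Fin N))))
      = (Matrix.detRowAlternating (R := ℝ) (n := A)).toMultilinearMap
          (fun i : A => ∑ n ∈ S, (c n * v n i) • (fun j : A => v n (j : Fin N))) from rfl,
    this]
  refine Finset.sum_congr rfl fun r _ => ?_
  have hsmul := (Matrix.detRowAlternating (R := ℝ) (n := A)).toMultilinearMap.map_smul_univ
    (fun i : A => c (r i) * v (r i) i) (fun i : A => (fun j : A => v (r i) (j : Fin N)))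
  simp only [smul_eq_mul] at hsmul ⊢
  rw [hsmul]
  rw [Finset.prod_mul_distrib]
  ring_nf
  rfl

open Finset in
/-- The key combinatorial regrouping. -/
lemma comb_regroup {N : ℕ} (A : Finset (Fin N)) (lam : Fin N → ℝ)
    (D : (A → Fin N) → ℝ) (hD : ∀ r, ¬ Function.Injective r → D r = 0) :
    ∑ r ∈ Fintype.piFinset (fun _ : A => (Finset.univ : Finset (Fin N))),
        (∏ i : A, lam (r i)) * D r =
      ∑ J ∈ Finset.univ.filter (fun J : Finset (Fin N) => J.card = A.card),
        (∏ n ∈ J, lam n) * ∑ r ∈ Fintype.piFinset (fun _ : A => J), D r := by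
  classical
  -- restrict both sides to injective functions
  have hleft : ∑ r ∈ Fintype.piFinset (fun _ : A => (Finset.univ : Finset (Fin N))),
      (∏ i : A, lam (r i)) * D r
      = ∑ r ∈ (Fintype.piFinset (fun _ : A => (Finset.univ : Finset (Fin N)))).filter
          (fun r => Function.Injective r),
        (∏ i : A, lam (r i)) * D r := by
    rw [Finset.sum_filter_of_ne]
    intro r _ hne
    by_contra hinj
    exact hne (by rw [hD r hinj, mul_zero])
  have hright : ∀ J : Finset (Fin N),
      ∑ r ∈ Fintype.piFinset (fun _ : A => J), D r
      = ∑ r ∈ (Fintype.piFinset (fun _ : A => J)).filter (fun r => Function.Injective r),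
          D r := by
    intro J
    rw [Finset.sum_filter_of_ne]
    intro r _ hne
    by_contra hinj
    exact hne (hD r hinj)
  rw [hleft]
  simp_rw [hright, Finset.mul_sum]
  rw [Finset.sum_sigma']
  refine Finset.sum_nbij' (fun r => (⟨Finset.univ.image r, r⟩ :
      Σ _ : Finset (Fin N), (A → Fin N))) (fun p => p.2) ?_ ?_ ?_ ?_ ?_
  · -- maps into sigma set
    intro r hr
    simp only [Finset.mem_filter, Fintype.mem_piFinset] at hr
    obtain ⟨-, hinj⟩ := hr
    simp only [Finset.mem_sigma, Finset.mem_filter, Finset.mem_univ, true_and,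
      Fintype.mem_piFinset]
    refine ⟨?_, fun i => Finset.mem_image_of_mem r (Finset.mem_univ i), hinj⟩
    rw [Finset.card_image_of_injective _ hinj, Finset.card_univ, Fintype.card_coe]
  · -- maps back into filtered set
    intro p hp
    simp only [Finset.mem_sigma, Finset.mem_filter, Finset.mem_univ, true_and,
      Fintype.mem_piFinset] at hp
    simp only [Finset.mem_filter, Fintype.mem_piFinset]
    exact ⟨fun i => Finset.mem_univ _, hp.2.2⟩
  · -- left inverse
    intro r _
    rfl
  · -- right inverse
    rintro ⟨J, r⟩ hp
    simp only [Finset.mem_sigma, Finset.mem_filter, Finset.mem_univ, true_and,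
      Fintype.mem_piFinset] at hp
    obtain ⟨hcard, hmem, hinj⟩ := hp
    have himg : Finset.univ.image r = J := by
      apply Finset.eq_of_subset_of_card_le
      · intro x hx
        obtain ⟨i, -, rfl⟩ := Finset.mem_image.mp hx
        exact hmem i
      · rw [Finset.card_image_of_injective _ hinj, Finset.card_univ, Fintype.card_coe, hcard]
    subst himg
    rfl
  · -- values agree
    intro r hr
    simp only [Finset.mem_filter, Fintype.mem_piFinset] at hr
    obtain ⟨-, hinj⟩ := hr
    have : ∏ n ∈ Finset.univ.image r, lam n = ∏ i : A, lam (r i) :=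
      Finset.prod_image (fun i _ j _ h => hinj h)
    rw [this]

/-- A DPP is a mixture of elementary DPPs: if `L = ∑ λ_n v_n v_nᵀ` with `{v_n}`
orthonormal and `λ_n ≥ 0`, then for every subset `A`,
`det L_A = ∑_{J : |J| = |A|} (∏_{n∈J} λ_n) det((∑_{n∈J} v_n v_nᵀ)_A)`. -/
theorem dpp_mixture_of_elementary {N : ℕ}
    (v : Fin N → (Fin N → ℝ)) (lam : Fin N → ℝ)
    (horth : ∀ i j, v i ⬝ᵥ v j = if i = j then (1 : ℝ) else 0)
    (hlam : ∀ n, 0 ≤ lam n)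
    (L : Matrix (Fin N) (Fin N) ℝ)
    (hL : L = ∑ n, lam n • vecMulVec (v n) (v n))
    (A : Finset (Fin N)) :
    (principalSubmatrix L A).det =
      ∑ J ∈ Finset.univ.filter (fun J : Finset (Fin N) => J.card = A.card),
        (∏ n ∈ J, lam n) *
          (principalSubmatrix (∑ n ∈ J, vecMulVec (v n) (v n)) A).det := by
  classical
  subst hL
  set D : (A → Fin N) → ℝ := fun r =>
    (∏ i : A, v (r i) i) * (Matrix.of fun i j : A => v (r i) (j : Fin N)).det with hDdef
  have hD : ∀ r, ¬ Function.Injective r → D r = 0 := by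
    intro r hinj
    rw [Function.not_injective_iff] at hinj
    obtain ⟨i, j, hij, hne⟩ := hinj
    have : (Matrix.of fun i j : A => v (r i) (j : Fin N)).det = 0 := by
      apply Matrix.det_zero_of_row_eq hne
      funext k
      simp [hij]
    simp [hDdef, this]
  have hmain := comb_regroup A lam D hD
  have hLHS : (principalSubmatrix (∑ n, lam n • vecMulVec (v n) (v n)) A).det
      = ∑ r ∈ Fintype.piFinset (fun _ : A => (Finset.univ : Finset (Fin N))),
          (∏ i : A, lam (r i)) * D r := by
    rw [principalSubmatrix_det_expand v A lam Finset.univ]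
  have hRHS : ∀ J : Finset (Fin N),
      (principalSubmatrix (∑ n ∈ J, vecMulVec (v n) (v n)) A).det
      = ∑ r ∈ Fintype.piFinset (fun _ : A => J), D r := by
    intro J
    have : (∑ n ∈ J, vecMulVec (v n) (v n))
        = ∑ n ∈ J, (fun _ : Fin N => (1 : ℝ)) n • vecMulVec (v n) (v n) := by
      simp
    rw [this, principalSubmatrix_det_expand v A (fun _ => (1 : ℝ)) J]
    simp [hDdef]
  rw [hLHS, hmain]
  exact Finset.sum_congr rfl fun J _ => by rw [hRHS J]
end

section
/- For a symmetric PSD matrix L and the associated marginal kernel K = (L+I)^{-1}L, the singleton marginal of the L-ensemble matches K: ∑_{A ⊆ Y, i ∈ A} det(L_A)/det(L+I) = K_{i,i} for every index i. -/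
open Matrix BigOperators

/-!
Expanding `det (M + 1)` multilinearly in the rows, the term that takes the rows in `A` from `M`
and the others from `1` is block triangular with determinant `det M_A`, so
`det (L + 1) = ∑_A det L_A`. The diagonal cofactor `adj (L + 1) i i` is the same expansion for `L`
with row `i` zeroed, which keeps exactly the minors with `i ∉ A`. Hence the minors with `i ∈ A` sum
to `det (L + 1) - adj (L + 1) i i`, and dividing by `det (L + 1)` gives
`1 - (L + 1)⁻¹ i i = ((L + 1)⁻¹ * L) i i`.
-/

open Finset

section PrincipalMinors

variable {N : ℕ}

lemma principalSubmatrix_updateRow_of_notMem {α : Type*} (M : Matrix (Fin N) (Fin N) α)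
    {A : Finset (Fin N)} {i : Fin N} (v : Fin N → α) (hi : i ∉ A) :
    principalSubmatrix (M.updateRow i v) A = principalSubmatrix M A := by
  ext j k
  simp only [principalSubmatrix, submatrix_apply, updateRow_ne (ne_of_mem_of_not_mem j.2 hi)]

variable {R : Type*} [CommRing R]

lemma det_of_ite_mem_one (M : Matrix (Fin N) (Fin N) R) (A : Finset (Fin N)) :
    (of fun i => if i ∈ A then M i else (1 : Matrix (Fin N) (Fin N) R) i).det =
      (principalSubmatrix M A).det := by
  set P := of fun i => if i ∈ A then M i else (1 : Matrix (Fin N) (Fin N) R) i with hP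
  have hblock : ∀ i, i ∉ A → ∀ j, j ∈ A → P i j = 0 := fun i hi j hj => by
    simp only [hP, of_apply, if_neg hi, one_apply_ne (ne_of_mem_of_not_mem hj hi).symm]
  have hin : toSquareBlockProp P (· ∈ A) = principalSubmatrix M A := by
    ext i j
    simp [hP, toSquareBlockProp, toBlock_apply, i.2, principalSubmatrix]
  have hout : toSquareBlockProp P (· ∉ A) = 1 := by
    ext i j
    simp [hP, toSquareBlockProp, toBlock_apply, i.2, one_apply, Subtype.ext_iff]
  rw [twoBlockTriangular_det P (· ∈ A) hblock, hout, det_one, mul_one]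
  convert congrArg det hin

theorem det_add_one_eq_sum_det_principalSubmatrix (M : Matrix (Fin N) (Fin N) R) :
    (M + 1).det = ∑ A : Finset (Fin N), (principalSubmatrix M A).det := by
  rw [← Fintype.sum_congr _ _ (det_of_ite_mem_one M)]
  exact (detRowAlternating : (Fin N → R) [⋀^Fin N]→ₗ[R] R).map_add_univ
    (M : Fin N → Fin N → R) (1 : Matrix (Fin N) (Fin N) R)

lemma det_principalSubmatrix_updateRow_zero_of_mem (M : Matrix (Fin N) (Fin N) R)
    {A : Finset (Fin N)} {i : Fin N} (hi : i ∈ A) :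
    (principalSubmatrix (M.updateRow i 0) A).det = 0 :=
  det_eq_zero_of_row_eq_zero ⟨i, hi⟩ fun _ => by
    simp only [principalSubmatrix, submatrix_apply, updateRow_self, Pi.zero_apply]

lemma adjugate_add_one_apply_self (M : Matrix (Fin N) (Fin N) R) (i : Fin N) :
    (M + 1).adjugate i i =
      ∑ A ∈ univ.filter (fun A : Finset (Fin N) => i ∉ A), (principalSubmatrix M A).det := by
  have hrow : (M + 1).updateRow i (Pi.single i 1) = M.updateRow i 0 + 1 := by
    ext j k
    rcases eq_or_ne j i with rfl | hj
    · simp [one_apply, Pi.single_apply, eq_comm]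
    · simp [hj]
  rw [adjugate_apply, hrow, det_add_one_eq_sum_det_principalSubmatrix,
    ← sum_filter_add_sum_filter_not univ (fun A => i ∈ A),
    sum_eq_zero fun A hA => det_principalSubmatrix_updateRow_zero_of_mem M (mem_filter.1 hA).2,
    zero_add]
  exact sum_congr rfl fun A hA =>
    congrArg det (principalSubmatrix_updateRow_of_notMem M 0 (mem_filter.1 hA).2)

lemma sum_det_principalSubmatrix_filter_mem (M : Matrix (Fin N) (Fin N) R) (i : Fin N) :
    ∑ A ∈ univ.filter (fun A : Finset (Fin N) => i ∈ A), (principalSubmatrix M A).det =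
      (M + 1).det - (M + 1).adjugate i i := by
  rw [adjugate_add_one_apply_self, det_add_one_eq_sum_det_principalSubmatrix,
    ← sum_filter_add_sum_filter_not univ (fun A => i ∈ A), add_sub_cancel_right]

lemma inv_add_one_mul_self_apply {K : Type*} [Field K] (M : Matrix (Fin N) (Fin N) K)
    (h : (M + 1).det ≠ 0) (i : Fin N) :
    ((M + 1)⁻¹ * M) i i = 1 - (M + 1).adjugate i i / (M + 1).det := by
  have hinv_mul : (M + 1)⁻¹ * M = 1 - (M + 1)⁻¹ := by
    rw [eq_sub_iff_add_eq, ← mul_add_one, nonsing_inv_mul _ h.isUnit]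
  rw [hinv_mul, Matrix.sub_apply, one_apply_eq, Matrix.inv_def, Matrix.smul_apply, smul_eq_mul,
    Ring.inverse_eq_inv, inv_mul_eq_div]

theorem sum_det_principalSubmatrix_filter_mem_div {K : Type*} [Field K]
    (M : Matrix (Fin N) (Fin N) K) (h : (M + 1).det ≠ 0) (i : Fin N) :
    ∑ A ∈ univ.filter (fun A : Finset (Fin N) => i ∈ A),
        (principalSubmatrix M A).det / (M + 1).det = ((M + 1)⁻¹ * M) i i := by
  rw [← sum_div, sum_det_principalSubmatrix_filter_mem, inv_add_one_mul_self_apply M h,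
    sub_div, div_self h]

end PrincipalMinors

/-- The singleton marginal of the L-ensemble matches the marginal kernel
`K = (L+I)⁻¹ L`: the probability that `i` belongs to the random subset equals `K_{ii}`. -/
theorem L_ensemble_singleton_marginal {N : ℕ}
    (L : Matrix (Fin N) (Fin N) ℝ) (hL : L.PosSemidef) (i : Fin N) :
    ∑ A ∈ Finset.univ.filter (fun A : Finset (Fin N) => i ∈ A),
        (principalSubmatrix L A).det / (L + 1).det = ((L + 1)⁻¹ * L) i i :=
  sum_det_principalSubmatrix_filter_mem_div L (PosDef.posSemidef_add hL PosDef.one).det_pos.ne' i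
end
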